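/- arXiv:1311.5549 — 2 statements merged into one kernel-verified Lean document; each statement's English description precedes it below -/
import Mathlib

section
/- Let L ≥ 1 be an integer and define a sequence (g_n)_{n≥0} of real numbers by g₀ = 1 and, for n ≥ 1, g_n = Σ_{n₁+⋯+n_L = n−1, n_i ≥ 0} g_{n₁} ⋯ g_{n_L}. Then the radius of convergence of the power series g(z) = Σ_{n≥0} g_n zⁿ is positive and finite; equivalently, 0 < limsup_{n→∞} g_n^{1/n} < ∞. -/
open Filter

/-- the radius of convergence of ∑ f_n zⁿ -/
noncomputable def seriesRadius {𝕜 : Type*} [NormedField 𝕜] (f : ℕ → 𝕜) : ENNReal :=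
  ⨆ (ρ : NNReal) (_ : ∃ C : ℝ, ∀ n : ℕ, ‖f n‖ * (ρ : ℝ) ^ n ≤ C), (ρ : ENNReal)

open Finset Finset.Nat

section Aux

lemma sum_tuple_succ (f : ℕ → ℝ) (k m : ℕ) :
    ∑ t ∈ antidiagonalTuple (k+1) m, ∏ i, f (t i)
      = ∑ p ∈ Finset.HasAntidiagonal.antidiagonal m,
          f p.1 * ∑ t ∈ antidiagonalTuple k p.2, ∏ i, f (t i) := by
  simp_rw [Finset.mul_sum]
  rw [Finset.sum_sigma']
  refine Finset.sum_nbij' (fun t => ⟨(t 0, ∑ i, Fin.tail t i), Fin.tail t⟩)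
    (fun x => Fin.cons x.1.1 x.2) ?_ ?_ ?_ ?_ ?_
  · intro t ht
    simp only [Finset.Nat.mem_antidiagonalTuple] at ht
    simp only [Finset.mem_sigma, Finset.HasAntidiagonal.mem_antidiagonal,
      Finset.Nat.mem_antidiagonalTuple]
    refine ⟨?_, trivial⟩
    rw [← ht, ← Fin.sum_cons (t 0) (Fin.tail t), Fin.cons_self_tail]
  · rintro ⟨⟨a,b⟩, t⟩ h
    simp only [Finset.mem_sigma, Finset.HasAntidiagonal.mem_antidiagonal,
      Finset.Nat.mem_antidiagonalTuple] at h ⊢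
    rw [Fin.sum_cons, h.2, h.1]
  · intro t ht
    exact Fin.cons_self_tail t
  · rintro ⟨⟨a,b⟩, t⟩ h
    simp only [Fin.cons_zero, Fin.tail_cons]
    congr 1
    simp only [Finset.mem_sigma, Finset.HasAntidiagonal.mem_antidiagonal,
      Finset.Nat.mem_antidiagonalTuple] at h
    rw [h.2]
  · intro t ht
    rw [← Fin.prod_cons (f (t 0)) (fun i => f (Fin.tail t i))]
    exact Finset.prod_congr rfl fun i _ => Fin.cases rfl (fun j => rfl) i

lemma invsq_sum_le (m : ℕ) :
    ∑ i ∈ Finset.range (m+1), (1:ℝ)/((i:ℝ)+1)^2 ≤ 2 - 1/((m:ℝ)+1) := by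
  induction m with
  | zero => norm_num
  | succ m ih =>
    rw [Finset.sum_range_succ]
    have h1 : (0:ℝ) < (m:ℝ)+1 := by positivity
    have h2 : (0:ℝ) < (m:ℝ)+2 := by positivity
    have key : (1:ℝ)/(((m:ℝ)+1)+1)^2 ≤ 1/((m:ℝ)+1) - 1/((m:ℝ)+2) := by
      rw [div_sub_div _ _ (ne_of_gt h1) (ne_of_gt h2),
        div_le_div_iff₀ (by positivity) (by positivity)]
      nlinarith [sq_nonneg ((m:ℝ)+1)]
    push_cast
    have hre : ((m:ℝ)+1+1) = (m:ℝ)+2 := by ring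
    rw [hre] at key ⊢
    linarith

lemma conv2' (m : ℕ) :
    ∑ p ∈ Finset.HasAntidiagonal.antidiagonal m, (1/((p.1:ℝ)+1)^2) * (1/((p.2:ℝ)+1)^2)
      ≤ 16/((m:ℝ)+1)^2 := by
  have step : ∀ p ∈ Finset.HasAntidiagonal.antidiagonal m,
      (1/((p.1:ℝ)+1)^2) * (1/((p.2:ℝ)+1)^2)
        ≤ 4/((m:ℝ)+1)^2 * ((1/((p.1:ℝ)+1)^2) + (1/((p.2:ℝ)+1)^2)) := by
    rintro ⟨i,j⟩ hp
    rw [Finset.HasAntidiagonal.mem_antidiagonal] at hp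
    have hij : (i:ℝ) + (j:ℝ) = m := by exact_mod_cast congrArg Nat.cast hp
    have key : ((m:ℝ)+1)^2 ≤ 4*(((i:ℝ)+1)^2 + ((j:ℝ)+1)^2) := by
      nlinarith [sq_nonneg ((i:ℝ) - (j:ℝ))]
    rw [div_mul_div_comm, one_mul,
      div_add_div _ _ (by positivity) (by positivity), div_mul_div_comm,
      div_le_div_iff₀ (by positivity) (by positivity)]
    nlinarith [mul_le_mul_of_nonneg_right key
      (by positivity : (0:ℝ) ≤ (((i:ℝ)+1)^2*((j:ℝ)+1)^2))]
  calc ∑ p ∈ Finset.HasAntidiagonal.antidiagonal m, (1/((p.1:ℝ)+1)^2) * (1/((p.2:ℝ)+1)^2)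
      ≤ ∑ p ∈ Finset.HasAntidiagonal.antidiagonal m,
          4/((m:ℝ)+1)^2 * ((1/((p.1:ℝ)+1)^2) + (1/((p.2:ℝ)+1)^2)) :=
        Finset.sum_le_sum step
    _ = 4/((m:ℝ)+1)^2 * ((∑ p ∈ Finset.HasAntidiagonal.antidiagonal m, 1/((p.1:ℝ)+1)^2)
          + ∑ p ∈ Finset.HasAntidiagonal.antidiagonal m, 1/((p.2:ℝ)+1)^2) := by
        rw [← Finset.mul_sum, Finset.sum_add_distrib]
    _ ≤ 16/((m:ℝ)+1)^2 := by
        have e1 : ∑ p ∈ Finset.HasAntidiagonal.antidiagonal m, (1:ℝ)/((p.1:ℝ)+1)^2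
            = ∑ i ∈ Finset.range (m+1), (1:ℝ)/((i:ℝ)+1)^2 := by
          rw [Finset.Nat.sum_antidiagonal_eq_sum_range_succ_mk]
        have e2 : ∑ p ∈ Finset.HasAntidiagonal.antidiagonal m, (1:ℝ)/((p.2:ℝ)+1)^2
            = ∑ i ∈ Finset.range (m+1), (1:ℝ)/((i:ℝ)+1)^2 := by
          rw [← Finset.Nat.sum_antidiagonal_swap,
            Finset.Nat.sum_antidiagonal_eq_sum_range_succ_mk]
          simp
        have hs : ∑ i ∈ Finset.range (m+1), (1:ℝ)/((i:ℝ)+1)^2 ≤ 2 := by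
          have := invsq_sum_le m
          have h1 : (0:ℝ) < 1/((m:ℝ)+1) := by positivity
          linarith
        rw [e1, e2]
        have hm2 : (0:ℝ) < ((m:ℝ)+1)^2 := by positivity
        rw [div_mul_eq_mul_div, div_le_div_iff₀ hm2 hm2]
        nlinarith

lemma convL (k : ℕ) : ∀ m : ℕ,
    ∑ t ∈ antidiagonalTuple (k+1) m, ∏ i, (1/((t i : ℝ)+1)^2)
      ≤ (16:ℝ)^k / ((m:ℝ)+1)^2 := by
  induction k with
  | zero =>
    intro m
    rw [show antidiagonalTuple 1 m = {![m]} from Finset.Nat.antidiagonalTuple_one m]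
    rw [Finset.sum_singleton]
    simp [Fin.prod_univ_one]
  | succ k ih =>
    intro m
    rw [sum_tuple_succ (fun j => 1/((j:ℝ)+1)^2) (k+1) m]
    calc ∑ p ∈ Finset.HasAntidiagonal.antidiagonal m,
          (1/((p.1:ℝ)+1)^2) * ∑ t ∈ antidiagonalTuple (k+1) p.2, ∏ i, (1/((t i : ℝ)+1)^2)
        ≤ ∑ p ∈ Finset.HasAntidiagonal.antidiagonal m,
            (1/((p.1:ℝ)+1)^2) * ((16:ℝ)^k / ((p.2:ℝ)+1)^2) := by
          refine Finset.sum_le_sum fun p _ => ?_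
          exact mul_le_mul_of_nonneg_left (ih p.2) (by positivity)
      _ = (16:ℝ)^k * ∑ p ∈ Finset.HasAntidiagonal.antidiagonal m,
            (1/((p.1:ℝ)+1)^2) * (1/((p.2:ℝ)+1)^2) := by
          rw [Finset.mul_sum]
          refine Finset.sum_congr rfl fun p _ => by ring
      _ ≤ (16:ℝ)^k * (16/((m:ℝ)+1)^2) :=
          mul_le_mul_of_nonneg_left (conv2' m) (by positivity)
      _ = (16:ℝ)^(k+1) / ((m:ℝ)+1)^2 := by ring

end Aux

/-- for L ≥ 1 and the sequence defined by g₀ = 1 and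
g_n = ∑_{n₁+⋯+n_L = n−1} g_{n₁}⋯g_{n_L} for n ≥ 1, the generating function
∑ g_n zⁿ has a positive and finite radius of convergence. -/
theorem stmt9 (L : ℕ) (hL : 1 ≤ L) (g : ℕ → ℝ) (hg0 : g 0 = 1)
    (hrec : ∀ n : ℕ, 1 ≤ n →
      g n = ∑ t ∈ Finset.Nat.antidiagonalTuple L (n - 1), ∏ i, g (t i)) :
    0 < seriesRadius g ∧ seriesRadius g < ⊤ := by
  obtain ⟨k, rfl⟩ : ∃ k, L = k + 1 := ⟨L - 1, (Nat.succ_pred_eq_of_pos hL).symm⟩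
  have hmemle : ∀ nn : ℕ, ∀ t ∈ antidiagonalTuple (k+1) nn, ∀ i, t i ≤ nn := by
    intro nn t ht i
    rw [Finset.Nat.mem_antidiagonalTuple] at ht
    calc t i ≤ ∑ j, t j := Finset.single_le_sum (fun j _ => Nat.zero_le _)
                (Finset.mem_univ i)
      _ = nn := ht
  -- lower bound : 1 ≤ g n
  have hlow : ∀ n, 1 ≤ g n := by
    intro n
    induction n using Nat.strong_induction_on with
    | _ n ih =>
      match n with
      | 0 => rw [hg0]
      | (nn+1) =>
        rw [hrec (nn+1) (by omega)]
        simp only [Nat.add_sub_cancel]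
        set t0 : Fin (k+1) → ℕ := Fin.cons nn (fun _ => 0) with ht0
        have ht0mem : t0 ∈ antidiagonalTuple (k+1) nn := by
          rw [Finset.Nat.mem_antidiagonalTuple, ht0, Fin.sum_cons]
          simp
        have h1 : (1:ℝ) ≤ ∏ i, g (t0 i) := by
          calc (1:ℝ) = ∏ _i : Fin (k+1), (1:ℝ) := Finset.prod_const_one.symm
            _ ≤ ∏ i, g (t0 i) := Finset.prod_le_prod (fun _ _ => zero_le_one)
                (fun i _ => ih (t0 i) (Nat.lt_succ_of_le (hmemle nn t0 ht0mem i)))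
        refine le_trans h1
          (Finset.single_le_sum (f := fun t => ∏ i, g (t i)) (fun t ht => ?_) ht0mem)
        exact Finset.prod_nonneg fun i _ =>
          le_trans zero_le_one (ih (t i) (Nat.lt_succ_of_le (hmemle nn t ht i)))
  set B : ℝ := 4 * 16^k with hB
  have hBpos : 0 < B := by positivity
  -- upper bound : g n ≤ B^n / (n+1)^2
  have hup : ∀ n, g n ≤ B^n / ((n:ℝ)+1)^2 := by
    intro n
    induction n using Nat.strong_induction_on with
    | _ n ih =>
      match n with
      | 0 => rw [hg0]; norm_num
      | (nn+1) =>
        rw [hrec (nn+1) (by omega)]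
        simp only [Nat.add_sub_cancel]
        have hBn : (0:ℝ) < B^nn := pow_pos hBpos nn
        calc ∑ t ∈ antidiagonalTuple (k+1) nn, ∏ i, g (t i)
            ≤ ∑ t ∈ antidiagonalTuple (k+1) nn, B^nn * ∏ i, (1/((t i : ℝ)+1)^2) := by
              refine Finset.sum_le_sum fun t ht => ?_
              have hsum : ∑ i, t i = nn := (Finset.Nat.mem_antidiagonalTuple).1 ht
              calc ∏ i, g (t i)
                  ≤ ∏ i, (B^(t i) / ((t i : ℝ)+1)^2) := by
                    refine Finset.prod_le_prod (fun i _ => ?_) (fun i _ => ?_)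
                    · linarith [hlow (t i)]
                    · exact ih (t i) (Nat.lt_succ_of_le (hmemle nn t ht i))
                _ = (∏ i, B^(t i)) * ∏ i, (1/((t i : ℝ)+1)^2) := by
                    rw [← Finset.prod_mul_distrib]
                    exact Finset.prod_congr rfl fun i _ => div_eq_mul_one_div _ _
                _ = B^nn * ∏ i, (1/((t i : ℝ)+1)^2) := by
                    rw [Finset.prod_pow_eq_pow_sum, hsum]
          _ = B^nn * ∑ t ∈ antidiagonalTuple (k+1) nn, ∏ i, (1/((t i : ℝ)+1)^2) :=
              (Finset.mul_sum _ _ _).symm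
          _ ≤ B^nn * ((16:ℝ)^k / ((nn:ℝ)+1)^2) :=
              mul_le_mul_of_nonneg_left (convL k nn) (le_of_lt hBn)
          _ ≤ B^(nn+1) / ((↑(nn+1):ℝ)+1)^2 := by
              push_cast
              rw [← mul_div_assoc, div_le_div_iff₀ (by positivity) (by positivity),
                pow_succ B nn, hB]
              have hq : ((nn:ℝ)+1+1)^2 ≤ 4*((nn:ℝ)+1)^2 := by
                nlinarith [Nat.cast_nonneg (α := ℝ) nn]
              nlinarith [mul_le_mul_of_nonneg_left hq
                (show (0:ℝ) ≤ (4*16^k:ℝ)^nn*16^k by positivity)]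
  constructor
  · -- positive radius
    set ρ : NNReal := ⟨1/B, by positivity⟩ with hρ
    have hρcoe : (ρ:ℝ) = 1/B := rfl
    have hadm : ∃ C : ℝ, ∀ n : ℕ, ‖g n‖ * (ρ:ℝ) ^ n ≤ C := by
      refine ⟨1, fun n => ?_⟩
      have h1 : ‖g n‖ = g n := Real.norm_of_nonneg (by linarith [hlow n])
      have h2 : g n ≤ B^n := (hup n).trans (div_le_self (by positivity)
        (by nlinarith [Nat.cast_nonneg (α := ℝ) n]))
      rw [h1, hρcoe]
      calc g n * (1/B)^n ≤ B^n * (1/B)^n :=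
            mul_le_mul_of_nonneg_right h2 (by positivity)
        _ = 1 := by rw [one_div, inv_pow, mul_inv_cancel₀ (by positivity)]
    have hle : (ρ : ENNReal) ≤ seriesRadius g := le_iSup₂_of_le ρ hadm le_rfl
    have hρpos : 0 < ρ := by
      have : (0:ℝ) < (ρ:ℝ) := by rw [hρcoe]; positivity
      exact_mod_cast this
    exact lt_of_lt_of_le (ENNReal.coe_pos.mpr hρpos) hle
  · -- finite radius
    have hub : seriesRadius g ≤ 1 := by
      refine iSup₂_le fun ρ hρ => ?_
      obtain ⟨C, hC⟩ := hρ
      rw [← ENNReal.coe_one, ENNReal.coe_le_coe]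
      by_contra hcon
      push_neg at hcon
      have hcon' : (1:ℝ) < ρ := by exact_mod_cast hcon
      obtain ⟨n, hn⟩ := pow_unbounded_of_one_lt C hcon'
      have hle : ((ρ:ℝ))^n ≤ C := by
        have h := hC n
        have h1 : ‖g n‖ = g n := Real.norm_of_nonneg (by linarith [hlow n])
        rw [h1] at h
        nlinarith [hlow n, pow_nonneg (by linarith : (0:ℝ) ≤ (ρ:ℝ)) n]
      linarith
    exact lt_of_le_of_lt hub ENNReal.one_lt_top
end

section
/- Let q be real with q > 1 and let f(z) = Σ_{n≥0} f_n zⁿ be the unique formal power series solution of f(z) = 1 + z f(z) + q z² f(z) f(qz). Then there exist real constants c̃₀ > 0 and c̃₁ > 0 such that f_{2m} / q^{m²} → c̃₀ and f_{2m+1} / q^{m²+m} → c̃₁ as m → ∞. -/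
open PowerSeries Filter Topology Finset

set_option maxHeartbeats 1000000


/-! Auxiliary: the exponent function e(n) = ⌊n²/4⌋ -/

def eexp (n : ℕ) : ℕ := n^2/4

lemma eexp_step (n : ℕ) : eexp (n+2) = eexp n + (n+1) := by
  have h : (n+2)^2 = n^2 + (4*n+4) := by ring
  unfold eexp; rw [h]; omega

lemma eexp_even (m : ℕ) : eexp (2*m) = m*m := by
  unfold eexp
  have : (2*m)^2 = 4*(m*m) := by ring
  rw [this]; omega

lemma eexp_odd (m : ℕ) : eexp (2*m+1) = m*m + m := by
  unfold eexp
  have : (2*m+1)^2 = 4*(m*m+m) + 1 := by ring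
  rw [this]; omega

lemma eexp_mono : Monotone eexp :=
  fun _ _ hab => Nat.div_le_div_right (Nat.pow_le_pow_left hab 2)

lemma eexp_four_le (k : ℕ) : 4 * eexp k ≤ k^2 := by
  unfold eexp; omega

lemma eexp_four_ge (k : ℕ) : k^2 ≤ 4 * eexp k + 1 := by
  unfold eexp
  obtain ⟨m, rfl | rfl⟩ := Nat.even_or_odd' k
  · have : (2*m)^2 = 4*(m*m) := by ring
    rw [this]; omega
  · have : (2*m+1)^2 = 4*(m*m+m)+1 := by ring
    rw [this]; omega

lemma eexp_succ_step (m : ℕ) : eexp (m+1) + (m/2 + 1) ≤ eexp (m+2) := by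
  obtain ⟨k, rfl | rfl⟩ := Nat.even_or_odd' m
  · rw [show 2*k+1 = 2*k+1 by rfl, eexp_odd, show 2*k+2 = 2*(k+1) by ring, eexp_even]
    have : (2*k)/2 = k := by omega
    rw [this]; try nlinarith
  · rw [show 2*k+1+1 = 2*(k+1) by ring, eexp_even, show 2*k+1+2 = 2*(k+1)+1 by ring, eexp_odd]
    have : (2*k+1)/2 = k := by omega
    try rw [this]
    try nlinarith

lemma deficit (i j : ℕ) :
    2 * (eexp i + eexp j + j + 1) + (i*j + i - 1) ≤ 2 * eexp (i + j + 2) := by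
  rcases i with _ | i
  · rw [show 0 + j + 2 = j + 2 by omega, eexp_step j, show eexp 0 = 0 by rfl]
    omega
  · have h1 := eexp_four_le (i+1)
    have h2 := eexp_four_le j
    have h3 := eexp_four_ge (i+1+j+2)
    have key : 4*(eexp (i+1) + eexp j + j + 1) + 2*((i+1)*j + i) ≤ 4*eexp (i+1+j+2) := by
      nlinarith [sq_nonneg (i+j)]
    have hs : (i+1)*j + (i+1) - 1 = (i+1)*j + i := by
      have : (i+1)*j + (i+1) = ((i+1)*j + i) + 1 := by ring
      omega
    rw [hs]
    set P := (i+1)*j + i with hP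
    omega

lemma sqrt_one_lt {q : ℝ} (hq : 1 < q) : 1 < Real.sqrt q := by
  have hq0 : (0:ℝ) < q := lt_trans one_pos hq
  nlinarith [Real.sq_sqrt (le_of_lt hq0), Real.sqrt_nonneg q]

lemma pow_deficit (q : ℝ) (hq : 1 < q) (A E g : ℕ) (h : 2*A + g ≤ 2*E) :
    q ^ A ≤ q ^ E * ((Real.sqrt q)⁻¹) ^ g := by
  have hq0 : (0:ℝ) < q := lt_trans one_pos hq
  set r := Real.sqrt q with hr
  have hr1 : 1 ≤ r := le_of_lt (sqrt_one_lt hq)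
  have hr0 : 0 < r := lt_of_lt_of_le one_pos hr1
  have hr2 : r^2 = q := Real.sq_sqrt (le_of_lt hq0)
  rw [← hr2, ← pow_mul, ← pow_mul, inv_pow, mul_comm (r ^ (2*E))]
  rw [inv_mul_eq_div, le_div_iff₀ (pow_pos hr0 g), ← pow_add]
  exact pow_le_pow_right₀ hr1 (by omega)

lemma geom_le' (s : ℝ) (hs0 : 0 ≤ s) (hs1 : s < 1) (m : ℕ) :
    ∑ i ∈ Finset.range m, s^i ≤ (1-s)⁻¹ := by
  have h10 : 0 < 1 - s := by linarith
  rw [geom_sum_eq (ne_of_lt hs1)]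
  rw [show s^m - 1 = -(1 - s^m) by ring, show s - 1 = -(1-s) by ring, neg_div_neg_eq]
  rw [div_le_iff₀ h10, inv_mul_cancel₀ (ne_of_gt h10)]
  have := pow_nonneg hs0 m
  linarith

lemma sum_sg_le (s : ℝ) (hs0 : 0 ≤ s) (hs1 : s < 1) (n : ℕ) :
    ∑ p ∈ Finset.HasAntidiagonal.antidiagonal n, s ^ (p.1*p.2 + p.1 - 1) ≤ 2 * (1-s)⁻¹ := by
  have step1 : ∑ p ∈ Finset.HasAntidiagonal.antidiagonal n, s ^ (p.1*p.2 + p.1 - 1)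
      ≤ ∑ p ∈ Finset.HasAntidiagonal.antidiagonal n, (s ^ p.1 + s ^ p.2) := by
    refine Finset.sum_le_sum fun p hp => ?_
    obtain ⟨i, j⟩ := p
    simp only
    have hmin : min i j ≤ i*j + i - 1 := by
      rcases Nat.eq_zero_or_pos i with h|h
      · simp [h]
      rcases Nat.eq_zero_or_pos j with h'|h'
      · simp [h']
      have hij : i ≤ i*j := Nat.le_mul_of_pos_right i h'
      have : min i j ≤ i := min_le_left _ _
      omega
    have h2 : s ^ (i*j+i-1) ≤ s ^ (min i j) :=
      pow_le_pow_of_le_one hs0 (le_of_lt hs1) hmin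
    rcases min_cases i j with ⟨he, _⟩ | ⟨he, _⟩ <;> rw [he] at h2
    · have := pow_nonneg hs0 j; linarith
    · have := pow_nonneg hs0 i; linarith
  refine le_trans step1 ?_
  rw [Finset.sum_add_distrib]
  have e1 : ∑ p ∈ Finset.HasAntidiagonal.antidiagonal n, s ^ p.1 = ∑ i ∈ Finset.range (n+1), s ^ i := by
    rw [Finset.Nat.sum_antidiagonal_eq_sum_range_succ_mk]
  have e2 : ∑ p ∈ Finset.HasAntidiagonal.antidiagonal n, s ^ p.2 = ∑ i ∈ Finset.range (n+1), s ^ i := by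
    rw [Finset.Nat.sum_antidiagonal_eq_sum_range_succ_mk]
    rw [← Finset.sum_range_reflect]
    refine Finset.sum_congr rfl fun i hi => ?_
    congr 1
    rw [Finset.mem_range] at hi
    omega
  rw [e1, e2]
  have := geom_le' s hs0 hs1 (n+1)
  linarith

section main

variable (q : ℝ) (hq : 1 < q) (F : ℕ → ℝ)
  (h0 : F 0 = 1) (h1 : F 1 = 1)
  (hrec : ∀ n : ℕ, F (n+2) = F (n+1) +
      ∑ p ∈ Finset.HasAntidiagonal.antidiagonal n, q ^ (p.2+1) * (F p.1 * F p.2))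

include hq h0 h1 hrec

lemma lower : ∀ n, q ^ eexp n ≤ F n := by
  have hq0 : (0:ℝ) < q := lt_trans one_pos hq
  intro n
  induction n using Nat.strong_induction_on with
  | _ n ih =>
    match n with
    | 0 => rw [h0]; norm_num [eexp]
    | 1 => rw [h1]; norm_num [eexp]
    | (m+2) =>
      have hpos : ∀ k, k ≤ m+1 → 0 < F k := fun k hk =>
        lt_of_lt_of_le (pow_pos hq0 _) (ih k (by omega))
      rw [hrec m]
      have hterm : q ^ (m+1) * (F 0 * F m) ≤
          ∑ p ∈ Finset.HasAntidiagonal.antidiagonal m, q ^ (p.2+1) * (F p.1 * F p.2) := by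
        have hmem : ((0:ℕ), m) ∈ Finset.HasAntidiagonal.antidiagonal m := by simp
        refine Finset.single_le_sum (f := fun p : ℕ × ℕ => q ^ (p.2+1) * (F p.1 * F p.2)) ?_ hmem
        intro p hp
        rw [Finset.HasAntidiagonal.mem_antidiagonal] at hp
        have p1 : 0 < F p.1 := hpos p.1 (by omega)
        have p2 : 0 < F p.2 := hpos p.2 (by omega)
        positivity
      calc q ^ eexp (m+2) = q ^ (m+1) * q ^ eexp m := by
            rw [eexp_step, pow_add]; ring
        _ ≤ q ^ (m+1) * F m := by
            have := ih m (by omega)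
            nlinarith [pow_pos hq0 (m+1)]
        _ = q ^ (m+1) * (F 0 * F m) := by rw [h0]; ring
        _ ≤ ∑ p ∈ Finset.HasAntidiagonal.antidiagonal m, q ^ (p.2+1) * (F p.1 * F p.2) := hterm
        _ ≤ F (m+1) + ∑ p ∈ Finset.HasAntidiagonal.antidiagonal m, q ^ (p.2+1) * (F p.1 * F p.2) := by
            have := hpos (m+1) (le_refl _)
            linarith

lemma Fpos : ∀ n, 0 < F n := fun n =>
  lt_of_lt_of_le (pow_pos (lt_trans one_pos hq) _) (_root_.lower q hq F h0 h1 hrec n)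

lemma mono2 : ∀ n, q ^ (n+1) * F n ≤ F (n+2) := by
  intro n
  have hq0 : (0:ℝ) < q := lt_trans one_pos hq
  rw [hrec n]
  have hterm : q ^ (n+1) * (F 0 * F n) ≤
      ∑ p ∈ Finset.HasAntidiagonal.antidiagonal n, q ^ (p.2+1) * (F p.1 * F p.2) := by
    have hmem : ((0:ℕ), n) ∈ Finset.HasAntidiagonal.antidiagonal n := by simp
    refine Finset.single_le_sum (f := fun p : ℕ × ℕ => q ^ (p.2+1) * (F p.1 * F p.2)) ?_ hmem
    intro p hp
    have p1 := Fpos q hq F h0 h1 hrec p.1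
    have p2 := Fpos q hq F h0 h1 hrec p.2
    positivity
  have := Fpos q hq F h0 h1 hrec (n+1)
  rw [h0] at hterm
  nlinarith

lemma step_bound (n : ℕ) (c : ℕ → ℝ) (hcnn : ∀ k, 0 ≤ c k)
    (hb : ∀ k, k ≤ n+1 → F k ≤ c k * q ^ eexp k) :
    F (n+2) ≤ c (n+1) * q ^ eexp (n+1) +
      q ^ eexp (n+2) * ∑ p ∈ Finset.HasAntidiagonal.antidiagonal n,
        c p.1 * c p.2 * ((Real.sqrt q)⁻¹) ^ (p.1*p.2 + p.1 - 1) := by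
  have hq0 : (0:ℝ) < q := lt_trans one_pos hq
  rw [hrec n, Finset.mul_sum]
  refine add_le_add (hb (n+1) (le_refl _)) (Finset.sum_le_sum ?_)
  intro p hp
  rw [Finset.HasAntidiagonal.mem_antidiagonal] at hp
  obtain ⟨i, j⟩ := p
  simp only at hp ⊢
  have hFi := Fpos q hq F h0 h1 hrec i
  have hFj := Fpos q hq F h0 h1 hrec j
  have hi : F i ≤ c i * q ^ eexp i := hb i (by omega)
  have hj : F j ≤ c j * q ^ eexp j := hb j (by omega)
  have step1 : q ^ (j+1) * (F i * F j) ≤ c i * c j * q ^ (eexp i + eexp j + j + 1) := by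
    have h2 : F i * F j ≤ (c i * q ^ eexp i) * (c j * q ^ eexp j) := by
      apply mul_le_mul hi hj (le_of_lt hFj)
      exact le_trans (le_of_lt hFi) hi
    calc q ^ (j+1) * (F i * F j) ≤ q ^ (j+1) * ((c i * q ^ eexp i) * (c j * q ^ eexp j)) := by
          nlinarith [pow_pos hq0 (j+1)]
      _ = c i * c j * q ^ (eexp i + eexp j + j + 1) := by
          rw [pow_add, pow_add, pow_add]; ring
  refine le_trans step1 ?_
  have hdef : 2*(eexp i + eexp j + j + 1) + (i*j + i - 1) ≤ 2 * eexp (n+2) := by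
    have := deficit i j
    rwa [show i + j + 2 = n + 2 by omega] at this
  have hpd := pow_deficit q hq (eexp i + eexp j + j + 1) (eexp (n+2)) (i*j+i-1) hdef
  have hci : 0 ≤ c i * c j := mul_nonneg (hcnn i) (hcnn j)
  calc c i * c j * q ^ (eexp i + eexp j + j + 1)
      ≤ c i * c j * (q ^ eexp (n+2) * ((Real.sqrt q)⁻¹) ^ (i*j+i-1)) :=
        mul_le_mul_of_nonneg_left hpd hci
    _ = q ^ eexp (n+2) * (c i * c j * ((Real.sqrt q)⁻¹) ^ (i*j+i-1)) := by ring

lemma stage1 : ∃ C : ℝ, 1 ≤ C ∧ ∀ n, F n ≤ C^n * q ^ eexp n := by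
  have hq0 : (0:ℝ) < q := lt_trans one_pos hq
  set s := (Real.sqrt q)⁻¹ with hsdef
  have hr1 : 1 < Real.sqrt q := sqrt_one_lt hq
  have hs0 : 0 < s := inv_pos.mpr (lt_trans one_pos hr1)
  have hs1 : s < 1 := inv_lt_one_of_one_lt₀ hr1
  set W := 2 * (1-s)⁻¹ with hWdef
  have hW0 : 0 < W := by
    have : 0 < 1 - s := by linarith
    positivity
  set C := 1 + W with hCdef
  have hC1 : 1 ≤ C := by linarith
  have hC0 : 0 < C := by linarith
  refine ⟨C, hC1, ?_⟩
  intro n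
  induction n using Nat.strong_induction_on with
  | _ n ih =>
    match n with
    | 0 => rw [h0]; simp [eexp]
    | 1 => rw [h1]; show (1:ℝ) ≤ C^1 * q^(eexp 1)
           rw [show eexp 1 = 0 by rfl]; simp; linarith
    | (m+2) =>
      have hb : ∀ k, k ≤ m+1 → F k ≤ C^k * q ^ eexp k := fun k hk => ih k (by omega)
      have hsb := step_bound q hq F h0 h1 hrec m (fun k => C^k)
        (fun k => le_of_lt (pow_pos hC0 k)) hb
      have hsum : ∑ p ∈ Finset.HasAntidiagonal.antidiagonal m,
          C^p.1 * C^p.2 * s ^ (p.1*p.2 + p.1 - 1) ≤ C^m * W := by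
        have heq : ∀ p ∈ Finset.HasAntidiagonal.antidiagonal m,
            C^p.1 * C^p.2 * s ^ (p.1*p.2 + p.1 - 1) = C^m * s ^ (p.1*p.2 + p.1 - 1) := by
          intro p hp
          rw [Finset.HasAntidiagonal.mem_antidiagonal] at hp
          rw [← pow_add, hp]
        rw [Finset.sum_congr rfl heq, ← Finset.mul_sum]
        rw [hWdef]
        exact mul_le_mul_of_nonneg_left
          (sum_sg_le s (le_of_lt hs0) hs1 m) (le_of_lt (pow_pos hC0 m))
      have hee : q ^ eexp (m+1) ≤ q ^ eexp (m+2) :=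
        pow_le_pow_right₀ (le_of_lt hq) (eexp_mono (by omega))
      have hfinal : C^(m+1) * q ^ eexp (m+1) + q ^ eexp (m+2) * (C^m * W)
          ≤ C^(m+2) * q ^ eexp (m+2) := by
        have h1' : C^(m+1) * q ^ eexp (m+1) ≤ C^(m+1) * q ^ eexp (m+2) :=
          mul_le_mul_of_nonneg_left hee (le_of_lt (pow_pos hC0 _))
        have hqe : 0 < q ^ eexp (m+2) := pow_pos hq0 _
        have hCm : 0 < C^m := pow_pos hC0 m
        have expand : C^(m+2) = C^m * C * C := by ring
        have expand1 : C^(m+1) = C^m * C := by ring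
        have key : C^m * C + C^m * W ≤ C^m * C * C := by
          have : C + W ≤ C * C := by nlinarith
          nlinarith
        nlinarith
      calc F (m+2) ≤ _ := hsb
        _ ≤ C^(m+2) * q ^ eexp (m+2) := by
            refine le_trans (add_le_add_right (mul_le_mul_of_nonneg_left hsum
              (le_of_lt (pow_pos hq0 _))) _) hfinal

lemma stage2 : ∃ M : ℝ, 0 < M ∧ ∀ n, F n ≤ M * q ^ eexp n := by
  have hq0 : (0:ℝ) < q := lt_trans one_pos hq
  obtain ⟨C, hC1, hC⟩ := stage1 q hq F h0 h1 hrec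
  have hC0 : 0 < C := lt_of_lt_of_le one_pos hC1
  set s := (Real.sqrt q)⁻¹ with hsdef
  have hr1 : 1 < Real.sqrt q := sqrt_one_lt hq
  have hs0 : 0 < s := inv_pos.mpr (lt_trans one_pos hr1)
  have hs1 : s < 1 := inv_lt_one_of_one_lt₀ hr1
  set t := Real.sqrt s with htdef
  have ht0 : 0 < t := Real.sqrt_pos.mpr hs0
  have ht1 : t < 1 := by
    rw [htdef, show (1:ℝ) = Real.sqrt 1 by simp]
    exact Real.sqrt_lt_sqrt (le_of_lt hs0) hs1
  have hts : t^2 = s := Real.sq_sqrt (le_of_lt hs0)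
  set κ := 16 * C / t with hκdef
  have hκ0 : 0 < κ := by positivity
  -- choose N₁ for the tail sum, N₂ for smallness of C s^(m/2)
  obtain ⟨N₁, hN₁⟩ := Filter.eventually_atTop.mp
    ((tendsto_pow_atTop_nhds_zero_of_lt_one (le_of_lt ht0) ht1).eventually
      (gt_mem_nhds (show (0:ℝ) < (1-t)/κ by
        have : (0:ℝ) < 1 - t := by linarith
        positivity)))
  obtain ⟨N₂, hN₂⟩ := Filter.eventually_atTop.mp
    ((tendsto_pow_atTop_nhds_zero_of_lt_one (le_of_lt hs0) hs1).eventually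
      (gt_mem_nhds (show (0:ℝ) < 1/(2*C) by positivity)))
  set N := max (max N₁ (2*N₂)) 2 with hNdef
  have hN2 : 2 ≤ N := le_max_right _ _
  -- M₀ bound on initial segment
  set M₀ := 1 + ∑ k ∈ Finset.range (N+2), F k with hM₀def
  have hFnn : ∀ k, 0 ≤ F k := fun k => le_of_lt (Fpos q hq F h0 h1 hrec k)
  have hM₀1 : 1 ≤ M₀ := by
    have : 0 ≤ ∑ k ∈ Finset.range (N+2), F k := Finset.sum_nonneg fun k _ => hFnn k
    linarith
  have hM₀0 : 0 < M₀ := lt_of_lt_of_le one_pos hM₀1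
  have hM₀ : ∀ k, k ≤ N+1 → F k ≤ M₀ := by
    intro k hk
    have : F k ≤ ∑ j ∈ Finset.range (N+2), F j :=
      Finset.single_le_sum (fun j _ => hFnn j) (Finset.mem_range.mpr (by omega))
    linarith
  -- the envelope
  set A : ℕ → ℝ := fun n => M₀ * (1 + ∑ k ∈ Finset.Ico N n, κ * t^k) with hAdef
  have htail : ∀ n, ∑ k ∈ Finset.Ico N n, κ * t^k ≤ 1 := by
    intro n
    rcases le_or_gt n N with h | h
    · rw [Finset.Ico_eq_empty (by omega)]
      simp
    have : ∑ k ∈ Finset.Ico N n, κ * t^k = κ * (t^N * ∑ i ∈ Finset.range (n-N), t^i) := by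
      rw [Finset.sum_Ico_eq_sum_range]
      rw [Finset.mul_sum, Finset.mul_sum]
      refine Finset.sum_congr rfl fun i _ => ?_
      rw [pow_add]
      try ring
    rw [this]
    have hgeom : ∑ i ∈ Finset.range (n-N), t^i ≤ (1-t)⁻¹ :=
      geom_le' t (le_of_lt ht0) ht1 _
    have htN : t^N < (1-t)/κ := hN₁ N (le_trans (le_max_left _ _) (le_max_left _ _))
    have h1t : 0 < 1 - t := by linarith
    have hlhs : t^N * ∑ i ∈ Finset.range (n-N), t^i ≤ t^N * (1-t)⁻¹ :=
      mul_le_mul_of_nonneg_left hgeom (le_of_lt (pow_pos ht0 N))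
    have : κ * (t^N * ∑ i ∈ Finset.range (n-N), t^i) ≤ κ * (t^N * (1-t)⁻¹) :=
      mul_le_mul_of_nonneg_left hlhs (le_of_lt hκ0)
    refine le_trans this ?_
    rw [lt_div_iff₀ hκ0] at htN
    have h2 : κ * t^N ≤ 1 - t := by linarith
    calc κ * (t^N * (1-t)⁻¹) = (κ * t^N) * (1-t)⁻¹ := by ring
      _ ≤ (1-t) * (1-t)⁻¹ :=
          mul_le_mul_of_nonneg_right h2 (inv_nonneg.mpr (le_of_lt h1t))
      _ = 1 := mul_inv_cancel₀ (ne_of_gt h1t)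
  have htailnn : ∀ n, 0 ≤ ∑ k ∈ Finset.Ico N n, κ * t^k := fun n =>
    Finset.sum_nonneg fun k _ => le_of_lt (mul_pos hκ0 (pow_pos ht0 k))
  have hAub : ∀ n, A n ≤ 2*M₀ := by
    intro n
    have := htail n
    simp only [hAdef]
    nlinarith
  have hAlb : ∀ n, M₀ ≤ A n := by
    intro n
    have := htailnn n
    simp only [hAdef]
    nlinarith
  have hA0 : ∀ n, 0 < A n := fun n => lt_of_lt_of_le hM₀0 (hAlb n)
  have hAstep : ∀ m, N ≤ m → A m + M₀ * (κ * t^m) ≤ A (m+2) := by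
    intro m hm
    simp only [hAdef]
    rw [Finset.sum_Ico_succ_top (by omega : N ≤ m+1), Finset.sum_Ico_succ_top hm]
    have : 0 ≤ κ * t^(m+1) := le_of_lt (mul_pos hκ0 (pow_pos ht0 _))
    nlinarith
  -- main induction
  have main : ∀ n, F n ≤ A n * q ^ eexp n := by
    intro n
    induction n using Nat.strong_induction_on with
    | _ n ih =>
      rcases lt_or_ge n (N+2) with hn | hn
      · have hqe : (1:ℝ) ≤ q ^ eexp n := one_le_pow₀ (le_of_lt hq)
        calc F n ≤ M₀ := hM₀ n (by omega)
          _ = M₀ * 1 := (mul_one _).symm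
          _ ≤ A n * q ^ eexp n :=
              mul_le_mul (hAlb n) hqe one_pos.le (le_of_lt (hA0 n))
      obtain ⟨m, rfl⟩ : ∃ m, n = m + 2 := ⟨n - 2, by omega⟩
      have hmN : N ≤ m := by omega
      have hm2 : 2 ≤ m := by omega
      -- the comparison function
      set c : ℕ → ℝ := fun k => if k = m then A m else min (C^k) (2*M₀) with hcdef
      have hcnn : ∀ k, 0 ≤ c k := by
        intro k
        simp only [hcdef]
        split
        · exact le_of_lt (hA0 m)
        · exact le_min (le_of_lt (pow_pos hC0 k)) (by linarith)
      have hcb : ∀ k, k ≠ m → c k ≤ 2*M₀ := by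
        intro k hk
        simp only [hcdef, if_neg hk]
        exact min_le_right _ _
      have hcb2 : ∀ k, k ≠ m → c k ≤ C^k := by
        intro k hk
        simp only [hcdef, if_neg hk]
        exact min_le_left _ _
      have hb : ∀ k, k ≤ m+1 → F k ≤ c k * q ^ eexp k := by
        intro k hk
        simp only [hcdef]
        by_cases hkm : k = m
        · subst hkm
          rw [if_pos rfl]
          exact ih k (by omega)
        · rw [if_neg hkm]
          have hqe : 0 < q ^ eexp k := pow_pos hq0 _
          have hle1 : F k ≤ C^k * q ^ eexp k := hC k
          have hle2 : F k ≤ 2*M₀ * q ^ eexp k := by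
            have := ih k (by omega)
            have := hAub k
            nlinarith
          rcases min_cases (C^k) (2*M₀) with ⟨he, _⟩ | ⟨he, _⟩ <;> rw [he]
          · exact hle1
          · exact hle2
      have hsb := step_bound q hq F h0 h1 hrec m c hcnn hb
      -- now bound the sum
      set v := C * s^(m - m/2) with hvdef
      have hv0 : 0 < v := mul_pos hC0 (pow_pos hs0 _)
      have hsm2 : C * s^(m/2) ≤ 1/2 := by
        have hN₂le : N₂ ≤ m/2 := by
          have : 2*N₂ ≤ N := le_trans (le_max_right _ _) (le_max_left _ _)
          omega
        have h1 : s^(m/2) ≤ s^N₂ :=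
          pow_le_pow_of_le_one (le_of_lt hs0) (le_of_lt hs1) hN₂le
        have h2 : s^N₂ < 1/(2*C) := hN₂ N₂ (le_refl _)
        have : s^(m/2) < 1/(2*C) := lt_of_le_of_lt h1 h2
        rw [lt_div_iff₀ (by positivity)] at this
        nlinarith
      have hvle : v ≤ C * s^(m/2) := by
        have : s^(m - m/2) ≤ s^(m/2) :=
          pow_le_pow_of_le_one (le_of_lt hs0) (le_of_lt hs1) (by omega)
        exact mul_le_mul_of_nonneg_left this (le_of_lt hC0)
      have hv12 : v ≤ 1/2 := le_trans hvle hsm2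
      have hv1 : v < 1 := by linarith
      -- split the sum
      have hmem1 : ((0:ℕ), m) ∈ Finset.HasAntidiagonal.antidiagonal m := by simp
      have hne : ((m:ℕ), 0) ≠ ((0:ℕ), m) := by
        intro hcon
        have : m = 0 := (Prod.mk.injEq _ _ _ _).mp hcon |>.1
        omega
      have hmem2 : ((m:ℕ), 0) ∈ (Finset.HasAntidiagonal.antidiagonal m).erase (0, m) :=
        Finset.mem_erase.mpr ⟨hne, by simp⟩
      set T := ((Finset.HasAntidiagonal.antidiagonal m).erase ((0:ℕ), m)).erase ((m:ℕ), 0) with hTdef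
      set G : ℕ × ℕ → ℝ := fun p => c p.1 * c p.2 * s ^ (p.1*p.2 + p.1 - 1) with hGdef
      have hsplit : ∑ p ∈ Finset.HasAntidiagonal.antidiagonal m, G p
          = (∑ p ∈ T, G p) + G (m, 0) + G (0, m) := by
        rw [← Finset.sum_erase_add _ _ hmem1, ← Finset.sum_erase_add _ _ hmem2]
      have hm0 : ¬(0 = m) := by omega
      have hc0' : c 0 = 1 := by
        simp only [hcdef, if_neg hm0, pow_zero]
        rw [min_eq_left (by linarith : (1:ℝ) ≤ 2*M₀)]
      have hcm : c m = A m := by simp only [hcdef, if_pos]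
      have hG0m : G (0, m) = A m := by
        show c 0 * c m * s ^ (0*m + 0 - 1) = A m
        have he : (0*m + 0 - 1 : ℕ) = 0 := by omega
        rw [he, pow_zero, hc0', hcm]
        ring
      have hGm0 : G (m, 0) ≤ 2*M₀ * v := by
        show c m * c 0 * s ^ (m*0 + m - 1) ≤ 2*M₀ * v
        rw [hc0', hcm]
        have he : m * 0 + m - 1 = m - 1 := by omega
        rw [he]
        have hsle : s^(m-1) ≤ s^(m - m/2) :=
          pow_le_pow_of_le_one (le_of_lt hs0) (le_of_lt hs1) (by omega)
        have hAm : A m ≤ 2*M₀ := hAub m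
        have hs1' : s^(m-1) ≤ v := by
          rw [hvdef]
          have h1C := mul_le_mul_of_nonneg_right hC1 (pow_nonneg (le_of_lt hs0) (m - m/2))
          rw [one_mul] at h1C
          exact le_trans hsle h1C
        rw [mul_one]
        exact mul_le_mul hAm hs1' (pow_nonneg (le_of_lt hs0) _) (by linarith)
      have hTmem : ∀ p : ℕ × ℕ, p ∈ T → 1 ≤ p.1 ∧ 1 ≤ p.2 ∧ p.1 + p.2 = m := by
        intro p hp
        rw [hTdef, Finset.mem_erase, Finset.mem_erase, Finset.HasAntidiagonal.mem_antidiagonal] at hp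
        obtain ⟨hne1, hne2, hsum⟩ := hp
        constructor
        · rcases Nat.eq_zero_or_pos p.1 with h|h
          · exfalso; apply hne2; ext
            · exact h
            · simp only; omega
          · omega
        constructor
        · rcases Nat.eq_zero_or_pos p.2 with h|h
          · exfalso; apply hne1; ext
            · simp only; omega
            · exact h
          · omega
        · exact hsum
      have hGT : ∀ p : ℕ × ℕ, p ∈ T → G p ≤ 2*M₀ * (v^p.1 + v^p.2) := by
        intro p hp
        obtain ⟨hp1, hp2, hpsum⟩ := hTmem p hp
        obtain ⟨i, j⟩ := p
        simp only at hp1 hp2 hpsum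
        have him : i ≠ m := by omega
        have hjm : j ≠ m := by omega
        have hci2 : c i ≤ 2*M₀ := hcb i him
        have hcj2 : c j ≤ 2*M₀ := hcb j hjm
        have hciC : c i ≤ C^i := hcb2 i him
        have hcjC : c j ≤ C^j := hcb2 j hjm
        have hmin : min i j * (m - m/2) ≤ i*j + i - 1 := by
          have hmax : m - m/2 ≤ max i j := by
            have : min i j ≤ m/2 := by omega
            omega
          have : min i j * (m - m/2) ≤ min i j * max i j :=
            Nat.mul_le_mul_left _ hmax
          have heq : min i j * max i j = i * j := by
            rcases le_total i j with h|h
            · rw [min_eq_left h, max_eq_right h]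
            · rw [min_eq_right h, max_eq_left h]; ring
          rw [heq] at this
          omega
        have hvmin : G (i, j) ≤ 2*M₀ * v^(min i j) := by
          show c i * c j * s ^ (i*j + i - 1) ≤ 2*M₀ * v^(min i j)
          have hspow : s ^ (i*j + i - 1) ≤ s ^ (min i j * (m - m/2)) :=
            pow_le_pow_of_le_one (le_of_lt hs0) (le_of_lt hs1) hmin
          have hvpow : v^(min i j) = C^(min i j) * s^(min i j * (m - m/2)) := by
            rw [hvdef, mul_pow, ← pow_mul, Nat.mul_comm]
          rw [hvpow]
          have hcc : c i * c j ≤ C^(min i j) * (2*M₀) := by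
            rcases le_total i j with h|h
            · rw [min_eq_left h]
              exact mul_le_mul hciC hcj2 (hcnn j) (le_of_lt (pow_pos hC0 i))
            · rw [min_eq_right h]
              have := mul_le_mul hci2 hcjC (hcnn j) (by linarith : (0:ℝ) ≤ 2*M₀)
              exact le_trans this (le_of_eq (mul_comm _ _))
          calc c i * c j * s ^ (i*j + i - 1)
              ≤ (C^(min i j) * (2*M₀)) * s ^ (min i j * (m - m/2)) := by
                have hg0 : 0 ≤ s ^ (i*j+i-1) := pow_nonneg (le_of_lt hs0) _
                exact mul_le_mul hcc hspow hg0
                  (mul_nonneg (le_of_lt (pow_pos hC0 _)) (by linarith))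
            _ = 2*M₀ * (C^(min i j) * s^(min i j * (m - m/2))) := by ring
        refine le_trans hvmin ?_
        have hv2 : v^(min i j) ≤ v^i + v^j := by
          rcases min_cases i j with ⟨he, _⟩ | ⟨he, _⟩ <;> rw [he]
          · linarith [pow_pos hv0 j]
          · linarith [pow_pos hv0 i]
        exact mul_le_mul_of_nonneg_left hv2 (by linarith)
      have hTsum1 : ∑ p ∈ T, v^p.1 ≤ 3*v := by
        have hstep : ∀ p : ℕ × ℕ, p ∈ T → v^p.1 = v * v^(p.1 - 1) := by
          intro p hp
          have hp1 := (hTmem p hp).1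
          conv_lhs => rw [show p.1 = 1 + (p.1 - 1) by omega]
          rw [pow_add, pow_one]
        rw [Finset.sum_congr rfl hstep, ← Finset.mul_sum]
        have hsub : ∑ p ∈ T, v^(p.1-1) ≤ ∑ p ∈ Finset.HasAntidiagonal.antidiagonal m, v^(p.1-1) := by
          refine Finset.sum_le_sum_of_subset_of_nonneg ?_ ?_
          · rw [hTdef]
            exact subset_trans (Finset.erase_subset _ _) (Finset.erase_subset _ _)
          · intro p _ _
            exact pow_nonneg (le_of_lt hv0) _
        have hrange : ∑ p ∈ Finset.HasAntidiagonal.antidiagonal m, v^(p.1-1) ≤ 3 := by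
          rw [Finset.Nat.sum_antidiagonal_eq_sum_range_succ_mk]
          rw [Finset.sum_range_succ']
          simp only [Nat.add_sub_cancel, Nat.zero_sub, pow_zero]
          have := geom_le' v (le_of_lt hv0) hv1 m
          have hinv : (1-v)⁻¹ ≤ 2 := by
            rw [inv_le_comm₀ (by linarith) (by norm_num)]
            linarith
          linarith
        calc v * ∑ p ∈ T, v^(p.1-1) ≤ v * 3 :=
              mul_le_mul_of_nonneg_left (le_trans hsub hrange) (le_of_lt hv0)
          _ = 3*v := mul_comm v 3
      have hTsum2 : ∑ p ∈ T, v^p.2 ≤ 3*v := by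
        have hstep : ∀ p : ℕ × ℕ, p ∈ T → v^p.2 = v * v^(p.2 - 1) := by
          intro p hp
          have hp2 := (hTmem p hp).2.1
          conv_lhs => rw [show p.2 = 1 + (p.2 - 1) by omega]
          rw [pow_add, pow_one]
        rw [Finset.sum_congr rfl hstep, ← Finset.mul_sum]
        have hsub : ∑ p ∈ T, v^(p.2-1) ≤ ∑ p ∈ Finset.HasAntidiagonal.antidiagonal m, v^(p.2-1) := by
          refine Finset.sum_le_sum_of_subset_of_nonneg ?_ ?_
          · rw [hTdef]
            exact subset_trans (Finset.erase_subset _ _) (Finset.erase_subset _ _)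
          · intro p _ _
            exact pow_nonneg (le_of_lt hv0) _
        have hrange : ∑ p ∈ Finset.HasAntidiagonal.antidiagonal m, v^(p.2-1) ≤ 3 := by
          rw [Finset.Nat.sum_antidiagonal_eq_sum_range_succ_mk]
          have hrefl : ∑ i ∈ Finset.range (m+1), v^((i, m-i).2-1)
              = ∑ i ∈ Finset.range (m+1), v^(i-1) := by
            rw [← Finset.sum_range_reflect (fun i => v^(i-1)) (m+1)]
            refine Finset.sum_congr rfl fun i hi => ?_
            rw [Finset.mem_range] at hi
            try congr 1
            try simp only
            try omega
          rw [hrefl, Finset.sum_range_succ']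
          simp only [Nat.add_sub_cancel, Nat.zero_sub, pow_zero]
          have := geom_le' v (le_of_lt hv0) hv1 m
          have hinv : (1-v)⁻¹ ≤ 2 := by
            rw [inv_le_comm₀ (by linarith) (by norm_num)]
            linarith
          linarith
        calc v * ∑ p ∈ T, v^(p.2-1) ≤ v * 3 :=
              mul_le_mul_of_nonneg_left (le_trans hsub hrange) (le_of_lt hv0)
          _ = 3*v := mul_comm v 3
      -- assemble
      have hsb' : F (m+2) ≤ c (m+1) * q ^ eexp (m+1) +
          q ^ eexp (m+2) * ∑ p ∈ Finset.HasAntidiagonal.antidiagonal m, G p := hsb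
      have hsum_all : ∑ p ∈ Finset.HasAntidiagonal.antidiagonal m, G p ≤ A m + 14*(M₀*v) := by
        rw [hsplit]
        have hT : ∑ p ∈ T, G p ≤ 2*M₀*(3*v + 3*v) := by
          calc ∑ p ∈ T, G p ≤ ∑ p ∈ T, 2*M₀*(v^p.1 + v^p.2) := Finset.sum_le_sum hGT
            _ = 2*M₀*((∑ p ∈ T, v^p.1) + (∑ p ∈ T, v^p.2)) := by
                rw [← Finset.mul_sum, Finset.sum_add_distrib]
            _ ≤ 2*M₀*(3*v + 3*v) :=
                mul_le_mul_of_nonneg_left (by linarith [hTsum1, hTsum2]) (by linarith)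
        rw [hG0m]
        linarith [hGm0, hT]
      have hlead : c (m+1) * q ^ eexp (m+1) ≤ 2*M₀ * (q ^ eexp (m+2) * s^(m/2)) := by
        have hpd := pow_deficit q hq (eexp (m+1)) (eexp (m+2)) (m/2)
          (by have := eexp_succ_step m; omega)
        have hc1 : c (m+1) ≤ 2*M₀ := hcb (m+1) (by omega)
        have hc0 : 0 ≤ c (m+1) := hcnn (m+1)
        have hq1 : 0 < q ^ eexp (m+1) := pow_pos hq0 _
        exact mul_le_mul hc1 hpd (le_of_lt hq1) (by linarith)
      have hst : s^(m/2) ≤ t^(m-1) := by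
        have heq : s^(m/2) = t^(2*(m/2)) := by
          rw [pow_mul, hts]
        rw [heq]
        exact pow_le_pow_of_le_one (le_of_lt ht0) (le_of_lt ht1) (by omega)
      have htm : t^m = t * t^(m-1) := by
        conv_lhs => rw [show m = 1 + (m-1) by omega, pow_add, pow_one]
      have hκt : κ * t^m = 16*C*t^(m-1) := by
        calc κ * t^m = 16*C * (t / t) * t^(m-1) := by rw [hκdef, htm]; ring
          _ = 16*C*t^(m-1) := by rw [div_self (ne_of_gt ht0), mul_one]
      have hcorr : 2*M₀*s^(m/2) + 14*(M₀*v) ≤ M₀ * (κ * t^m) := by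
        rw [hκt]
        have h2 : s^(m/2) ≤ C * s^(m/2) :=
          le_mul_of_one_le_left (pow_nonneg (le_of_lt hs0) _) hC1
        have h3 : C * s^(m/2) ≤ C * t^(m-1) :=
          mul_le_mul_of_nonneg_left hst (le_of_lt hC0)
        have hv' : v ≤ C * t^(m-1) := le_trans hvle h3
        have hs' : s^(m/2) ≤ C * t^(m-1) := le_trans h2 h3
        have e1 : 2*M₀*s^(m/2) ≤ 2*M₀*(C*t^(m-1)) :=
          mul_le_mul_of_nonneg_left hs' (by linarith)
        have e2 : M₀*v ≤ M₀*(C*t^(m-1)) :=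
          mul_le_mul_of_nonneg_left hv' (le_of_lt hM₀0)
        calc 2*M₀*s^(m/2) + 14*(M₀*v) ≤ 2*M₀*(C*t^(m-1)) + 14*(M₀*(C*t^(m-1))) :=
              add_le_add e1 (mul_le_mul_of_nonneg_left e2 (by norm_num))
          _ = M₀*(16*C*t^(m-1)) := by ring
      have hfin : F (m+2) ≤ (A m + M₀ * (κ * t^m)) * q ^ eexp (m+2) := by
        have hq2 : 0 < q ^ eexp (m+2) := pow_pos hq0 _
        have hs2 : 0 < s^(m/2) := pow_pos hs0 _
        calc F (m+2) ≤ c (m+1) * q ^ eexp (m+1) +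
            q ^ eexp (m+2) * ∑ p ∈ Finset.HasAntidiagonal.antidiagonal m, G p := hsb'
          _ ≤ 2*M₀ * (q ^ eexp (m+2) * s^(m/2)) + q ^ eexp (m+2) * (A m + 14*(M₀*v)) :=
              add_le_add hlead (mul_le_mul_of_nonneg_left hsum_all (le_of_lt hq2))
          _ = (2*M₀*s^(m/2) + 14*(M₀*v) + A m) * q ^ eexp (m+2) := by ring
          _ ≤ (A m + M₀ * (κ * t^m)) * q ^ eexp (m+2) :=
              mul_le_mul_of_nonneg_right (by linarith [hcorr]) (le_of_lt hq2)
      refine le_trans hfin ?_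
      exact mul_le_mul_of_nonneg_right (hAstep m hmN) (le_of_lt (pow_pos hq0 _))
  refine ⟨2*M₀, by linarith, fun n => ?_⟩
  refine le_trans (main n) ?_
  exact mul_le_mul_of_nonneg_right (hAub n) (le_of_lt (pow_pos hq0 _))


end main

lemma rec_extract (q : ℝ) (f : PowerSeries ℝ)
    (hf : f = 1 + PowerSeries.X * f +
          PowerSeries.C q * PowerSeries.X ^ 2 * (f * PowerSeries.rescale q f)) :
    coeff 0 f = 1 ∧ coeff 1 f = 1 ∧
    ∀ n : ℕ, coeff (n+2) f = coeff (n+1) f +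
      ∑ p ∈ Finset.HasAntidiagonal.antidiagonal n, q ^ (p.2+1) * (coeff p.1 f * coeff p.2 f) := by
  have h0 : coeff 0 f = 1 := by
    conv_lhs => rw [hf]
    simp [mul_assoc, PowerSeries.coeff_zero_eq_constantCoeff]
  have h1 : coeff 1 f = 1 := by
    conv_lhs => rw [hf]
    rw [map_add, map_add]
    have e1 : (coeff 1) (1 : PowerSeries ℝ) = 0 := by simp
    have e2 : (coeff 1) (X * f) = coeff 0 f := PowerSeries.coeff_succ_X_mul 0 f
    have e3 : (coeff 1) (C q * X ^ 2 * (f * rescale q f)) = 0 := by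
      rw [mul_assoc, PowerSeries.coeff_C_mul]
      have : (coeff 1) (X ^ 2 * (f * rescale q f)) = 0 := by
        rw [pow_two, mul_assoc]
        rw [show (1:ℕ) = 0 + 1 by rfl, PowerSeries.coeff_succ_X_mul]
        simp
      rw [this]; ring
    rw [e1, e2, e3, h0]; ring
  refine ⟨h0, h1, fun n => ?_⟩
  conv_lhs => rw [hf]
  rw [map_add, map_add]
  have e1 : (coeff (n+2)) (1 : PowerSeries ℝ) = 0 := by simp
  have e2 : (coeff (n+2)) (X * f) = coeff (n+1) f := PowerSeries.coeff_succ_X_mul (n+1) f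
  have e3 : (coeff (n+2)) (C q * X ^ 2 * (f * rescale q f))
      = ∑ p ∈ Finset.HasAntidiagonal.antidiagonal n, q ^ (p.2+1) * (coeff p.1 f * coeff p.2 f) := by
    rw [mul_assoc, PowerSeries.coeff_C_mul]
    rw [show n + 2 = n + 2 by rfl]
    rw [PowerSeries.coeff_X_pow_mul (f * rescale q f) 2 n]
    rw [PowerSeries.coeff_mul]
    rw [Finset.mul_sum]
    refine Finset.sum_congr rfl fun p hp => ?_
    rw [PowerSeries.coeff_rescale]
    ring
  rw [e1, e2, e3]; ring

/-- for q > 1 real, the solution of f(z) = 1 + zf(z) + qz²f(z)f(qz)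
satisfies f_{2m} q^{−m²} → c̃₀ > 0 and f_{2m+1} q^{−(m²+m)} → c̃₁ > 0. -/
theorem stmt18 (q : ℝ) (hq : 1 < q) (f : PowerSeries ℝ)
    (hf : f = 1 + PowerSeries.X * f +
          PowerSeries.C q * PowerSeries.X ^ 2 * (f * PowerSeries.rescale q f)) :
    ∃ c₀ : ℝ, 0 < c₀ ∧ ∃ c₁ : ℝ, 0 < c₁ ∧
      Filter.Tendsto (fun m : ℕ => PowerSeries.coeff (2 * m) f * q ^ (-((m : ℤ) ^ 2)))
        Filter.atTop (𝓝 c₀) ∧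
      Filter.Tendsto
        (fun m : ℕ => PowerSeries.coeff (2 * m + 1) f * q ^ (-((m : ℤ) ^ 2 + (m : ℤ))))
        Filter.atTop (𝓝 c₁) := by
  have hq0 : (0:ℝ) < q := lt_trans one_pos hq
  obtain ⟨h0, h1, hrec⟩ := rec_extract q f hf
  set F : ℕ → ℝ := fun n => coeff n f with hFdef
  obtain ⟨M, hM0, hM⟩ := stage2 q hq F h0 h1 hrec
  have hmon := mono2 q hq F h0 h1 hrec
  have hlow := _root_.lower q hq F h0 h1 hrec
  -- even sequence
  set g0 : ℕ → ℝ := fun m => F (2*m) / q ^ (m*m) with hg0def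
  set g1 : ℕ → ℝ := fun m => F (2*m+1) / q ^ (m*m+m) with hg1def
  have hg0mono : Monotone g0 := by
    apply monotone_nat_of_le_succ
    intro m
    simp only [hg0def]
    rw [div_le_div_iff₀ (pow_pos hq0 _) (pow_pos hq0 _)]
    have h2 := hmon (2*m)
    have hexp : (m+1)*(m+1) = m*m + (2*m+1) := by ring
    calc F (2*m) * q ^ ((m+1)*(m+1)) = (q^(2*m+1) * F (2*m)) * q^(m*m) := by
          rw [hexp, pow_add]; ring
      _ ≤ F (2*m+2) * q^(m*m) := by
          have := pow_pos hq0 (m*m)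
          have := mono2 q hq F h0 h1 hrec (2*m)
          nlinarith
      _ = F (2*(m+1)) * q^(m*m) := by norm_num [show 2*(m+1) = 2*m+2 by ring]
  have hg1mono : Monotone g1 := by
    apply monotone_nat_of_le_succ
    intro m
    simp only [hg1def]
    rw [div_le_div_iff₀ (pow_pos hq0 _) (pow_pos hq0 _)]
    have hexp : (m+1)*(m+1)+(m+1) = (m*m+m) + (2*m+2) := by ring
    calc F (2*m+1) * q ^ ((m+1)*(m+1)+(m+1)) = (q^(2*m+2) * F (2*m+1)) * q^(m*m+m) := by
          rw [hexp, pow_add]; ring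
      _ ≤ F (2*m+3) * q^(m*m+m) := by
          have := pow_pos hq0 (m*m+m)
          have h3 := mono2 q hq F h0 h1 hrec (2*m+1)
          nlinarith
      _ = F (2*(m+1)+1) * q^(m*m+m) := by norm_num [show 2*(m+1)+1 = 2*m+3 by ring]
  have hg0bdd : ∀ m, g0 m ≤ M := by
    intro m
    simp only [hg0def]
    rw [div_le_iff₀ (pow_pos hq0 _)]
    have := hM (2*m)
    rwa [eexp_even] at this
  have hg1bdd : ∀ m, g1 m ≤ M := by
    intro m
    simp only [hg1def]
    rw [div_le_iff₀ (pow_pos hq0 _)]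
    have := hM (2*m+1)
    rwa [eexp_odd] at this
  have hb0 : BddAbove (Set.range g0) := ⟨M, by rintro x ⟨m, rfl⟩; exact hg0bdd m⟩
  have hb1 : BddAbove (Set.range g1) := ⟨M, by rintro x ⟨m, rfl⟩; exact hg1bdd m⟩
  have ht0 : Filter.Tendsto g0 Filter.atTop (𝓝 (⨆ m, g0 m)) := tendsto_atTop_ciSup hg0mono hb0
  have ht1 : Filter.Tendsto g1 Filter.atTop (𝓝 (⨆ m, g1 m)) := tendsto_atTop_ciSup hg1mono hb1
  have hg00 : g0 0 = 1 := by
    have hx : g0 0 = F 0 / q ^ 0 := by norm_num [hg0def]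
    rw [hx, pow_zero, div_one]
    exact h0
  have hg10 : g1 0 = 1 := by
    have hx : g1 0 = F 1 / q ^ 0 := by norm_num [hg1def]
    rw [hx, pow_zero, div_one]
    exact h1
  have hp0 : 0 < ⨆ m, g0 m := by
    have := le_ciSup hb0 0
    rw [hg00] at this
    linarith
  have hp1 : 0 < ⨆ m, g1 m := by
    have := le_ciSup hb1 0
    rw [hg10] at this
    linarith
  refine ⟨⨆ m, g0 m, hp0, ⨆ m, g1 m, hp1, ?_, ?_⟩
  · have heq : (fun m : ℕ => PowerSeries.coeff (2 * m) f * q ^ (-((m : ℤ) ^ 2))) = g0 := by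
      funext m
      rw [zpow_neg, show ((m:ℤ)^2) = ((m*m : ℕ) : ℤ) by push_cast; ring, zpow_natCast]
      simp only [hg0def, hFdef, div_eq_mul_inv]
    rw [heq]
    exact ht0
  · have heq : (fun m : ℕ => PowerSeries.coeff (2 * m + 1) f * q ^ (-((m : ℤ) ^ 2 + (m:ℤ)))) = g1 := by
      funext m
      rw [zpow_neg, show ((m:ℤ)^2 + (m:ℤ)) = ((m*m + m : ℕ) : ℤ) by push_cast; ring, zpow_natCast]
      simp only [hg1def, hFdef, div_eq_mul_inv]
    rw [heq]
    exact ht1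
end
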